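/- Ptolemy inequalities: for any points a,b,c,e ∈ ℍ one has Δ₁ ≤ 0, Δ₂ ≤ 0 and Δ₃ ≤ 0, where Δ₁ := S_ac·S_be − S_ae·S_bc − S_ab·S_ce, Δ₂ := S_ab·S_ce − S_ac·S_be − S_ae·S_bc, Δ₃ := S_ae·S_bc − S_ac·S_be − S_ab·S_ce. -/

import Mathlib

open Real Finset

noncomputable section

/-- Points of `ℝ³`. -/
abbrev V3 : Type := Fin 3 → ℝ

/-- The pseudo-Euclidean scalar product `⟨x,y⟩ = x₀y₀ − x₁y₁ − x₂y₂`. -/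
def pscal (x y : V3) : ℝ := x 0 * y 0 - x 1 * y 1 - x 2 * y 2

/-- The hyperboloid model `ℍ` of the hyperbolic plane. -/
def Hyp : Set V3 := {x | pscal x x = 1 ∧ 0 < x 0}

/-- Inverse hyperbolic cosine. -/
def arcoshR (x : ℝ) : ℝ := Real.log (x + Real.sqrt (x ^ 2 - 1))

/-- Hyperbolic distance `d(a,b) = arcosh ⟨a,b⟩`. -/
def dH (a b : V3) : ℝ := arcoshR (pscal a b)

/-- Determinant of the 3×3 matrix with columns `a`, `b`, `c`. -/
def det3 (a b c : V3) : ℝ :=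
  a 0 * (b 1 * c 2 - b 2 * c 1) - b 0 * (a 1 * c 2 - a 2 * c 1) + c 0 * (a 1 * b 2 - a 2 * b 1)

/-- `S_ab = sinh(d(a,b)/2)`. -/
def SS (a b : V3) : ℝ := Real.sinh (dH a b / 2)

/-- Signed area of the triangle `a b c`. -/
def triArea (a b c : V3) : ℝ :=
  2 * Real.arctan (det3 a b c / (pscal a b + pscal b c + pscal c a + 1))

/-- Signed area of the `n`-gon with vertices `z 1, …, z n`. -/
def polyArea (n : ℕ) (z : ℕ → V3) : ℝ :=
  ∑ k ∈ Finset.Ico 2 n, triArea (z 1) (z k) (z (k + 1))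

/-- Cyclic successor on `{1, …, n}`. -/
def nxt (n k : ℕ) : ℕ := k % n + 1

/-- Oriented convexity of the `n`-gon `z 1, …, z n`. -/
def OrientedConvex (n : ℕ) (z : ℕ → V3) : Prop :=
  ∀ k ∈ Finset.Icc 1 n, ∀ j ∈ Finset.Icc 1 n,
    j ≠ k → j ≠ nxt n k → 0 < det3 (z k) (z (nxt n k)) (z j)

/-- A set of points lies in a common 2-dimensional linear subspace of `ℝ³`. -/
def Collin (s : Set V3) : Prop :=
  ∃ W : Submodule ℝ V3, Module.finrank ℝ W = 2 ∧ ∀ x ∈ s, x ∈ W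

/-- A set of points lies in a common affine plane of `ℝ³` not containing the origin. -/
def Cocyc (s : Set V3) : Prop :=
  ∃ u : V3, ∃ p : ℝ, u ≠ 0 ∧ p ≠ 0 ∧ ∀ x ∈ s, pscal u x = p

/-!
Stereographic projection from `(-1, 0, 0)` maps `ℍ` to the Poincaré disk, and it rescales
distances conformally: `S_ab = w(a) w(b) |π a - π b|` with `w(x) = √((1 + x₀)/2)`. Hence each
Ptolemy inequality for `S` is the Euclidean Ptolemy inequality for the projected points,
multiplied by the positive factor `w(a) w(b) w(c) w(e)`.
-/

lemma pscal_comm (x y : V3) : pscal x y = pscal y x := by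
  unfold pscal; ring

lemma SS_comm (a b : V3) : SS a b = SS b a := by
  rw [SS, SS, dH, dH, pscal_comm]

/-- Reverse Cauchy–Schwarz inequality on the hyperboloid. -/
lemma one_le_pscal {a b : V3} (ha : a ∈ Hyp) (hb : b ∈ Hyp) : 1 ≤ pscal a b := by
  obtain ⟨ha1, ha0⟩ := ha
  obtain ⟨hb1, hb0⟩ := hb
  unfold pscal at *
  nlinarith [sq_nonneg (a 1 - b 1), sq_nonneg (a 2 - b 2), sq_nonneg (a 1 * b 2 - a 2 * b 1),
    mul_pos ha0 hb0, sq_nonneg (a 0 * b 0 + 1 + a 1 * b 1 + a 2 * b 2)]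

lemma arcoshR_eq_arcosh : arcoshR = Real.arcosh := rfl

lemma sinh_half_sq (t : ℝ) : sinh (t / 2) ^ 2 = (cosh t - 1) / 2 := by
  have h := cosh_two_mul (t / 2)
  rw [mul_div_cancel₀ t two_ne_zero, cosh_sq] at h
  linarith

lemma SS_nonneg {a b : V3} (ha : a ∈ Hyp) (hb : b ∈ Hyp) : 0 ≤ SS a b :=
  sinh_nonneg_iff.2 <| div_nonneg (arcosh_nonneg (one_le_pscal ha hb)) zero_le_two

lemma SS_sq {a b : V3} (ha : a ∈ Hyp) (hb : b ∈ Hyp) : SS a b ^ 2 = (pscal a b - 1) / 2 := by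
  rw [SS, sinh_half_sq, dH, arcoshR_eq_arcosh, cosh_arcosh (one_le_pscal ha hb)]

def toDisk (x : V3) : EuclideanSpace ℝ (Fin 2) :=
  WithLp.toLp 2 ![x 1 / (1 + x 0), x 2 / (1 + x 0)]

def diskWeight (x : V3) : ℝ := √((1 + x 0) / 2)

lemma SS_eq_diskWeight_mul_dist {a b : V3} (ha : a ∈ Hyp) (hb : b ∈ Hyp) :
    SS a b = diskWeight a * diskWeight b * dist (toDisk a) (toDisk b) := by
  have hA : 0 < 1 + a 0 := by linarith [ha.2]
  have hB : 0 < 1 + b 0 := by linarith [hb.2]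
  rw [← sq_eq_sq₀ (SS_nonneg ha hb) (by unfold diskWeight; positivity), SS_sq ha hb, mul_pow,
    mul_pow, diskWeight, diskWeight, sq_sqrt (by positivity), sq_sqrt (by positivity),
    EuclideanSpace.dist_eq, sq_sqrt (by positivity)]
  simp only [Fin.sum_univ_two, Real.dist_eq, sq_abs, toDisk, PiLp.toLp_apply,
    Matrix.cons_val_zero, Matrix.cons_val_one]
  have ha1 := ha.1
  have hb1 := hb.1
  unfold pscal at *
  field_simp
  linear_combination (1 + b 0) ^ 2 * ha1 + (1 + a 0) ^ 2 * hb1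

lemma ptolemy_SS {a b c e : V3} (ha : a ∈ Hyp) (hb : b ∈ Hyp) (hc : c ∈ Hyp) (he : e ∈ Hyp) :
    SS a c * SS b e ≤ SS a b * SS c e + SS b c * SS a e := by
  set W := diskWeight a * diskWeight b * diskWeight c * diskWeight e
  have hW : 0 ≤ W := by unfold W diskWeight; positivity
  simp only [SS_eq_diskWeight_mul_dist ha hb, SS_eq_diskWeight_mul_dist ha hc,
    SS_eq_diskWeight_mul_dist ha he, SS_eq_diskWeight_mul_dist hb hc,
    SS_eq_diskWeight_mul_dist hb he, SS_eq_diskWeight_mul_dist hc he]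
  calc _ = W * (dist (toDisk a) (toDisk c) * dist (toDisk b) (toDisk e)) := by ring
    _ ≤ W * (dist (toDisk a) (toDisk b) * dist (toDisk c) (toDisk e) +
          dist (toDisk b) (toDisk c) * dist (toDisk a) (toDisk e)) :=
        mul_le_mul_of_nonneg_left (EuclideanGeometry.mul_dist_le_mul_dist_add_mul_dist ..) hW
    _ = _ := by ring

/-- Corollary 3.5 (Ptolemy inequalities): for any four points of `ℍ` the three Ptolemy
expressions are nonpositive. -/
theorem ptolemy_inequalities (a b c e : V3)
    (ha : a ∈ Hyp) (hb : b ∈ Hyp) (hc : c ∈ Hyp) (he : e ∈ Hyp) :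
    SS a c * SS b e - SS a e * SS b c - SS a b * SS c e ≤ 0 ∧
    SS a b * SS c e - SS a c * SS b e - SS a e * SS b c ≤ 0 ∧
    SS a e * SS b c - SS a c * SS b e - SS a b * SS c e ≤ 0 := by
  have h₁ := ptolemy_SS ha hb hc he
  have h₂ := ptolemy_SS ha hc hb he
  have h₃ := ptolemy_SS ha hb he hc
  rw [SS_comm c b] at h₂
  rw [SS_comm e c] at h₃
  exact ⟨by linarith, by linarith, by linarith⟩
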